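/- arXiv:2512.17634 — 4 statements merged into one kernel-verified Lean document; each statement's English description precedes it below -/
import Mathlib

section
/- Let g_k, g_{k-1}, d_{k-1} be vectors in R^n with g_{k-1}^T d_{k-1} ≤ -r_1 ‖g_{k-1}‖² for some r_1 > 0, ‖g_{k-1}‖ ≠ 0, and suppose the Wolfe curvature condition g_k^T d_{k-1} ≤ c_2 g_{k-1}^T d_{k-1} holds for some 0 < c_2 < 1. Define the Fletcher–Reeves direction d_k = -g_k + β_k d_{k-1} with β_k = ‖g_k‖²/‖g_{k-1}‖². Then g_k^T d_k ≤ -(1 + c_2 r_1) ‖g_k‖². -/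
open RealInnerProductSpace

theorem stmt_0 (n : ℕ) (gk gk1 dk1 dk : EuclideanSpace ℝ (Fin n)) (r1 c2 : ℝ)
    (hr1 : 0 < r1) (hgk1 : ‖gk1‖ ≠ 0)
    (hdesc : ⟪gk1, dk1⟫ ≤ -r1 * ‖gk1‖ ^ 2)
    (hc2pos : 0 < c2) (hc2lt : c2 < 1)
    (hwolfe : ⟪gk, dk1⟫ ≤ c2 * ⟪gk1, dk1⟫)
    (hdk : dk = -gk + (‖gk‖ ^ 2 / ‖gk1‖ ^ 2) • dk1) :
    ⟪gk, dk⟫ ≤ -(1 + c2 * r1) * ‖gk‖ ^ 2 := by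
  have hg1 : (0:ℝ) < ‖gk1‖ ^ 2 := by positivity
  set β := ‖gk‖ ^ 2 / ‖gk1‖ ^ 2 with hβ
  have hβnn : 0 ≤ β := by positivity
  have hexp : ⟪gk, dk⟫ = -‖gk‖ ^ 2 + β * ⟪gk, dk1⟫ := by
    rw [hdk, inner_add_right, inner_neg_right, real_inner_smul_right,
      real_inner_self_eq_norm_sq]
  have h1 : β * ⟪gk, dk1⟫ ≤ β * (c2 * (-r1 * ‖gk1‖ ^ 2)) := by
    apply mul_le_mul_of_nonneg_left _ hβnn
    calc ⟪gk, dk1⟫ ≤ c2 * ⟪gk1, dk1⟫ := hwolfe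
      _ ≤ c2 * (-r1 * ‖gk1‖ ^ 2) := by nlinarith
  have hcancel : β * ‖gk1‖ ^ 2 = ‖gk‖ ^ 2 := by
    rw [hβ]; exact div_mul_cancel₀ _ hg1.ne'
  have h2 : β * (c2 * (-r1 * ‖gk1‖ ^ 2)) = -(c2 * r1) * ‖gk‖ ^ 2 := by
    rw [← hcancel]; ring
  linarith [h1, hexp]
end

section
/- Let g_k, g_{k-1}, d_{k-1} be vectors in R^n with g_{k-1}^T d_{k-1} < 0, and suppose g_k^T d_{k-1} ≤ c_2 g_{k-1}^T d_{k-1} for some 0 < c_2 < 1. Define the Conjugate-Descent direction d_k = -g_k + β_k d_{k-1} with β_k = -‖g_k‖²/(g_{k-1}^T d_{k-1}). Then g_k^T d_k ≤ -(1 + c_2) ‖g_k‖² < 0 whenever g_k ≠ 0. -/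
open RealInnerProductSpace

theorem stmt_1 (n : ℕ) (gk gk1 dk1 dk : EuclideanSpace ℝ (Fin n)) (c2 : ℝ)
    (hdesc : ⟪gk1, dk1⟫ < 0)
    (hc2pos : 0 < c2) (hc2lt : c2 < 1)
    (hwolfe : ⟪gk, dk1⟫ ≤ c2 * ⟪gk1, dk1⟫)
    (hdk : dk = -gk + (-(‖gk‖ ^ 2 / ⟪gk1, dk1⟫)) • dk1)
    (hgk : gk ≠ 0) :
    ⟪gk, dk⟫ ≤ -(1 + c2) * ‖gk‖ ^ 2 ∧ ⟪gk, dk⟫ < 0 := by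
  have hns : ‖gk‖ ^ 2 > 0 := pow_pos (norm_pos_iff.mpr hgk) 2
  have hkey : ⟪gk, dk⟫ = -‖gk‖ ^ 2 - ‖gk‖ ^ 2 / ⟪gk1, dk1⟫ * ⟪gk, dk1⟫ := by
    rw [hdk, inner_add_right, inner_neg_right, real_inner_smul_right,
      real_inner_self_eq_norm_sq]
    ring
  have ht : ⟪gk1, dk1⟫ ≠ 0 := ne_of_lt hdesc
  have hr : c2 ≤ ⟪gk, dk1⟫ / ⟪gk1, dk1⟫ := by
    rw [le_div_iff_of_neg hdesc]; linarith
  have h1 : ⟪gk, dk⟫ ≤ -(1 + c2) * ‖gk‖ ^ 2 := by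
    rw [hkey, div_mul_eq_mul_div, mul_div_assoc]
    nlinarith
  exact ⟨h1, lt_of_le_of_lt h1 (by nlinarith)⟩
end

section
/- Let f: R^n → R be continuously differentiable and bounded below, x ∈ R^n, and d ∈ R^n a descent direction (∇f(x)^T d < 0). Then for any constants 0 < c_1 < c_2 < 1, there exists a step length η > 0 satisfying both the Armijo condition f(x + η d) ≤ f(x) + c_1 η ∇f(x)^T d and the curvature condition ∇f(x + η d)^T d ≥ c_2 ∇f(x)^T d. -/
open RealInnerProductSpace

theorem stmt_4 (n : ℕ) (f : EuclideanSpace ℝ (Fin n) → ℝ)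
    (hf : ContDiff ℝ 1 f) (hbdd : BddBelow (Set.range f))
    (x d : EuclideanSpace ℝ (Fin n))
    (hdesc : ⟪gradient f x, d⟫ < 0)
    (c1 c2 : ℝ) (hc1 : 0 < c1) (hc12 : c1 < c2) (hc2 : c2 < 1) :
    ∃ η : ℝ, 0 < η ∧
      f (x + η • d) ≤ f x + c1 * η * ⟪gradient f x, d⟫ ∧
      ⟪gradient f (x + η • d), d⟫ ≥ c2 * ⟪gradient f x, d⟫ := by
  set g : ℝ := ⟪gradient f x, d⟫ with hg
  set φ : ℝ → ℝ := fun t => f (x + t • d) with hφ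
  set h : ℝ → ℝ := fun t => φ t - (f x + c1 * t * g) with hh
  have hdiff : Differentiable ℝ f := hf.differentiable one_ne_zero
  -- derivative of φ
  have hφ' : ∀ t : ℝ, HasDerivAt φ ⟪gradient f (x + t • d), d⟫ t := by
    intro t
    have hc : HasDerivAt (fun t : ℝ => x + t • d) d t := by
      simpa using ((hasDerivAt_id t).smul_const d).const_add x
    have hF : HasFDerivAt f (InnerProductSpace.toDual ℝ _ (gradient f (x + t • d)))
        (x + t • d) := by
      rw [← hasGradientAt_iff_hasFDerivAt]
      exact (hdiff (x + t • d)).hasGradientAt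
    have := hF.comp_hasDerivAt t hc
    simp only [InnerProductSpace.toDual_apply_apply, Function.comp] at this
    exact this
  have hh' : ∀ t : ℝ, HasDerivAt h (⟪gradient f (x + t • d), d⟫ - c1 * g) t := by
    intro t
    have h2 : HasDerivAt (fun t : ℝ => f x + c1 * t * g) (c1 * g) t := by
      have := (((hasDerivAt_id t).const_mul c1).mul_const g).const_add (f x)
      simpa [mul_comm, mul_assoc, mul_left_comm] using this
    exact (hφ' t).sub h2
  have hhcont : Continuous h := by
    have hφc : Continuous φ := hf.continuous.comp (by continuity)
    simp only [hh]
    fun_prop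
  have hc1g : c1 * g < 0 := mul_neg_of_pos_of_neg hc1 hdesc
  have hgne : g ≠ 0 := hdesc.ne
  have hcne : c1 ≠ 0 := hc1.ne'
  -- lower bound
  obtain ⟨m, hm⟩ := hbdd
  have hmle : ∀ t : ℝ, m ≤ φ t := fun t => hm ⟨x + t • d, rfl⟩
  have hmfx : m ≤ f x := by
    have := hmle 0
    simpa only [hφ, zero_smul, add_zero] using this
  -- T with h T > 0
  set T : ℝ := (m - f x - 1) / (c1 * g) with hT
  have hTpos : 0 < T := div_pos_of_neg_of_neg (by linarith) hc1g
  have hTg : c1 * T * g = m - f x - 1 := by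
    rw [hT]; field_simp
  have hhT : 0 < h T := by
    simp only [hh]
    have := hmle T
    linarith
  -- small t₀ with h t₀ < 0
  have hh0 : h 0 = 0 := by simp [hh, hφ]
  have hd0 : HasDerivAt h ((1 - c1) * g) 0 := by
    have := hh' 0
    simpa only [zero_smul, add_zero, ← hg, sub_mul, one_mul] using this
  have hd0neg : (1 - c1) * g < 0 := mul_neg_of_pos_of_neg (by linarith) hdesc
  have hneg : ∃ t₀ ∈ Set.Ioo (0:ℝ) T, h t₀ < 0 := by
    have hlim : Filter.Tendsto (slope h 0) (nhdsWithin 0 (Set.Ioi 0))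
        (nhds ((1 - c1) * g)) :=
      (hasDerivAt_iff_tendsto_slope.mp hd0).mono_left
        (nhdsWithin_mono 0 (fun t ht => Set.mem_compl_singleton_iff.mpr (ne_of_gt ht)))
    have hev : ∀ᶠ t in nhdsWithin (0:ℝ) (Set.Ioi 0), slope h 0 t < 0 :=
      hlim.eventually_lt_const hd0neg
    have hev2 : ∀ᶠ t in nhdsWithin (0:ℝ) (Set.Ioi 0), t ∈ Set.Ioo (0:ℝ) T :=
      Ioo_mem_nhdsGT_of_mem ⟨le_refl 0, hTpos⟩
    obtain ⟨t₀, h1, h2⟩ := (hev.and hev2).exists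
    refine ⟨t₀, h2, ?_⟩
    have ht₀ : 0 < t₀ := h2.1
    rw [slope_def_field, hh0, sub_zero, sub_zero] at h1
    rcases div_neg_iff.mp h1 with ⟨_, hlt⟩ | ⟨hlt, _⟩
    · linarith
    · exact hlt
  obtain ⟨t₀, ht₀mem, ht₀neg⟩ := hneg
  -- minimum of h on [0, T]
  obtain ⟨η, hηmem, hηmin⟩ := (isCompact_Icc (a := (0:ℝ)) (b := T)).exists_isMinOn
    ⟨0, Set.left_mem_Icc.mpr hTpos.le⟩ hhcont.continuousOn
  have hηneg : h η < 0 := lt_of_le_of_lt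
    (hηmin ⟨ht₀mem.1.le, ht₀mem.2.le⟩) ht₀neg
  have hη0 : η ≠ 0 := fun e => by rw [e, hh0] at hηneg; exact lt_irrefl 0 hηneg
  have hηT : η ≠ T := fun e => by rw [e] at hηneg; linarith
  have hηIoo : η ∈ Set.Ioo (0:ℝ) T :=
    ⟨lt_of_le_of_ne hηmem.1 (Ne.symm hη0), lt_of_le_of_ne hηmem.2 hηT⟩
  have hlocal : IsLocalMin h η := hηmin.isLocalMin (Icc_mem_nhds hηIoo.1 hηIoo.2)
  have hderiv0 : ⟪gradient f (x + η • d), d⟫ - c1 * g = 0 :=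
    hlocal.hasDerivAt_eq_zero (hh' η)
  refine ⟨η, hηIoo.1, ?_, ?_⟩
  · have h3 : h η < 0 := hηneg
    simp only [hh, hφ] at h3
    linarith
  · have h4 : ⟪gradient f (x + η • d), d⟫ = c1 * g := by linarith
    rw [h4]
    have := mul_lt_mul_of_neg_right hc12 hdesc
    linarith
end

section
/- (Zoutendijk-type condition) Let f: R^n → R be continuously differentiable, bounded below by f*, with L-Lipschitz gradient g = ∇f. Suppose the sequence x_{k+1} = x_k + η_k d_k satisfies for each k: d_k is a descent direction, the Armijo condition f(x_{k+1}) ≤ f(x_k) + c_1 η_k g(x_k)^T d_k, and the curvature condition g(x_{k+1})^T d_k ≥ c_2 g(x_k)^T d_k, with 0 < c_1 < c_2 < 1. Then the series Σ_k (g(x_k)^T d_k)² / ‖d_k‖² converges; equivalently Σ_k ‖g(x_k)‖² cos²θ_k < ∞, where cos θ_k = -g(x_k)^T d_k / (‖g(x_k)‖ ‖d_k‖). -/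
open RealInnerProductSpace

theorem stmt_6 (n : ℕ) (f : EuclideanSpace ℝ (Fin n) → ℝ)
    (hf : ContDiff ℝ 1 f) (fstar : ℝ) (hbdd : ∀ x, fstar ≤ f x)
    (L : ℝ) (hL : 0 < L)
    (hLip : ∀ x y, ‖gradient f x - gradient f y‖ ≤ L * ‖x - y‖)
    (x : ℕ → EuclideanSpace ℝ (Fin n)) (d : ℕ → EuclideanSpace ℝ (Fin n)) (η : ℕ → ℝ)
    (c1 c2 : ℝ) (hc1 : 0 < c1) (hc12 : c1 < c2) (hc2 : c2 < 1)
    (hstep : ∀ k, x (k + 1) = x k + η k • d k)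
    (hηpos : ∀ k, 0 < η k)
    (hdesc : ∀ k, ⟪gradient f (x k), d k⟫ < 0)
    (hdne : ∀ k, d k ≠ 0)
    (harmijo : ∀ k, f (x (k + 1)) ≤ f (x k) + c1 * η k * ⟪gradient f (x k), d k⟫)
    (hcurv : ∀ k, ⟪gradient f (x (k + 1)), d k⟫ ≥ c2 * ⟪gradient f (x k), d k⟫) :
    Summable (fun k => ⟪gradient f (x k), d k⟫ ^ 2 / ‖d k‖ ^ 2) := by
  set a : ℕ → ℝ := fun k => ⟪gradient f (x k), d k⟫ ^ 2 / ‖d k‖ ^ 2 with ha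
  set C : ℝ := c1 * (1 - c2) / L with hC
  have hCpos : 0 < C := by
    apply div_pos _ hL
    exact mul_pos hc1 (by linarith)
  have key : ∀ k, C * a k ≤ f (x k) - f (x (k + 1)) := by
    intro k
    have hd : (0:ℝ) < ‖d k‖ := norm_pos_iff.mpr (hdne k)
    have hD : (0:ℝ) < ‖d k‖ ^ 2 := by positivity
    set p := ⟪gradient f (x k), d k⟫ with hp
    have hnorm : ‖x (k + 1) - x k‖ = η k * ‖d k‖ := by
      rw [hstep k]
      simp [norm_smul, abs_of_pos (hηpos k)]
    have h1 : ⟪gradient f (x (k + 1)) - gradient f (x k), d k⟫ ≤ L * η k * ‖d k‖ ^ 2 := by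
      calc ⟪gradient f (x (k + 1)) - gradient f (x k), d k⟫
          ≤ ‖gradient f (x (k + 1)) - gradient f (x k)‖ * ‖d k‖ := real_inner_le_norm _ _
        _ ≤ (L * ‖x (k + 1) - x k‖) * ‖d k‖ := by
            exact mul_le_mul_of_nonneg_right (hLip _ _) (norm_nonneg _)
        _ = L * η k * ‖d k‖ ^ 2 := by rw [hnorm]; ring
    have h2 : (c2 - 1) * p ≤ L * η k * ‖d k‖ ^ 2 := by
      have := hcurv k
      rw [inner_sub_left] at h1
      linarith
    have h3 : f (x (k + 1)) ≤ f (x k) + c1 * η k * p := harmijo k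
    have hCa : C * a k = c1 * (1 - c2) * p ^ 2 / (L * ‖d k‖ ^ 2) := by
      show c1 * (1 - c2) / L * (p ^ 2 / ‖d k‖ ^ 2) = _
      rw [div_mul_div_comm]
    rw [hCa, div_le_iff₀ (by positivity)]
    have hpneg : p < 0 := hdesc k
    nlinarith [mul_le_mul_of_nonneg_left h2 (le_of_lt (mul_pos hc1 (neg_pos.mpr hpneg))),
      mul_le_mul_of_nonneg_right (sub_le_iff_le_add'.mpr h3)
        (le_of_lt (mul_pos hL hD))]
  apply summable_of_sum_range_le (c := (f (x 0) - fstar) / C)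
  · intro k
    positivity
  · intro N
    have hsum : C * ∑ i ∈ Finset.range N, a i ≤ f (x 0) - f (x N) := by
      rw [Finset.mul_sum]
      calc ∑ i ∈ Finset.range N, C * a i
          ≤ ∑ i ∈ Finset.range N, (f (x i) - f (x (i + 1))) :=
            Finset.sum_le_sum fun i _ => key i
        _ = f (x 0) - f (x N) := Finset.sum_range_sub' (fun i => f (x i)) N
    rw [le_div_iff₀ hCpos, mul_comm]
    have := hbdd (x N)
    linarith [hsum]
end
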